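/- Let G ∈ R^{m×n} have full row rank m, and let G = U S Vᵀ be a compact singular value decomposition, with U ∈ R^{m×m} orthogonal, S ∈ R^{m×m} diagonal with positive diagonal entries, and V ∈ R^{n×m} having orthonormal columns (VᵀV = I_m). Then (G Gᵀ)^{-1/2} G = U Vᵀ; that is, one step of ASGO without momentum, gradient accumulation and damping coincides with one step of Muon without momentum. -/

import Mathlib

open Matrix
open scoped Classical

/-- The positive semidefinite square root of a positive semidefinite real matrix
(junk value `0` if the matrix is not positive semidefinite). -/
noncomputable def psdSqrt {k : ℕ} (X : Matrix (Fin k) (Fin k) ℝ) : Matrix (Fin k) (Fin k) ℝ :=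
  if h : X.PosSemidef then
    h.1.eigenvectorUnitary.1 * diagonal (fun i => Real.sqrt (h.1.eigenvalues i)) *
      (star h.1.eigenvectorUnitary : Matrix (Fin k) (Fin k) ℝ)
  else 0

/-! With `G = U S Vᵀ`, the matrix `M = U S Uᵀ` is positive definite and `G Gᵀ = M²`, so
`(G Gᵀ)^{1/2} = M` by uniqueness of the positive semidefinite square root; and `M (U Vᵀ) = G`,
whence `M⁻¹ G = U Vᵀ`. -/

/-- `psdSqrt` agrees with the continuous functional calculus square root, whose uniqueness
identifies it. -/
theorem psdSqrt_mul_self {k : ℕ} {M : Matrix (Fin k) (Fin k) ℝ} (hM : M.PosSemidef) :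
    psdSqrt (M * M) = M := by
  have hMM : (M * M).PosSemidef := by rw [← pow_two]; exact hM.pow 2
  have hcfc : cfc Real.sqrt (M * M) = M := by
    open scoped MatrixOrder in
    rw [← cfcₙ_eq_cfc, ← CFC.sqrt_eq_real_sqrt _ hMM.nonneg]
    open scoped MatrixOrder in
    exact CFC.sqrt_unique rfl hM.nonneg
  rw [IsHermitian.cfc_eq hMM.1, IsHermitian.cfc] at hcfc
  rw [psdSqrt, dif_pos hMM]
  simpa [Unitary.conjStarAlgAut_apply, Function.comp_def] using hcfc

section Orthogonal

variable {ι κ R : Type*} [Fintype ι] [DecidableEq ι] [CommRing R]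
  {U : Matrix ι ι R} {V : Matrix κ ι R}

theorem conj_mul_mul_eq (hU : Uᵀ * U = 1) (S : Matrix ι ι R) (W : Matrix ι κ R) :
    U * S * Uᵀ * (U * W) = U * S * W := by
  simp only [Matrix.mul_assoc, ← Matrix.mul_assoc Uᵀ, hU, Matrix.one_mul]

theorem mul_mul_transpose_mul_self [Fintype κ] (hU : Uᵀ * U = 1) (hV : Vᵀ * V = 1)
    {S : Matrix ι ι R} (hS : Sᵀ = S) :
    U * S * Vᵀ * (U * S * Vᵀ)ᵀ = U * S * Uᵀ * (U * S * Uᵀ) := by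
  rw [transpose_mul, transpose_mul, transpose_transpose, hS]
  simp only [Matrix.mul_assoc, ← Matrix.mul_assoc Vᵀ, ← Matrix.mul_assoc Uᵀ, hU, hV,
    Matrix.one_mul]

end Orthogonal

theorem stmt4_general (m n : ℕ)
    (G : Matrix (Fin m) (Fin n) ℝ)
    (U S : Matrix (Fin m) (Fin m) ℝ) (V : Matrix (Fin n) (Fin m) ℝ)
    (hU : Uᵀ * U = 1) (hV : Vᵀ * V = 1)
    (d : Fin m → ℝ) (hd : ∀ i, 0 < d i) (hS : S = Matrix.diagonal d)
    (hG : G = U * S * Vᵀ) :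
    (psdSqrt (G * Gᵀ))⁻¹ * G = U * Vᵀ := by
  subst hG hS
  have hM : (U * diagonal d * Uᵀ).PosSemidef := by
    simpa only [conjTranspose_eq_transpose_of_trivial] using
      (posSemidef_diagonal_iff.mpr fun i => (hd i).le).mul_mul_conjTranspose_same U
  have hUdet : IsUnit U.det := isUnit_det_of_left_inverse hU
  have hMdet : IsUnit (U * diagonal d * Uᵀ).det := by
    rw [det_mul, det_mul, det_transpose, det_diagonal]
    exact (hUdet.mul (Finset.prod_ne_zero_iff.mpr fun i _ => (hd i).ne').isUnit).mul hUdet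
  rw [mul_mul_transpose_mul_self hU hV (diagonal_transpose d), psdSqrt_mul_self hM,
    ← conj_mul_mul_eq hU _ Vᵀ]
  exact nonsing_inv_mul_cancel_left _ _ hMdet

/-- if `G ∈ ℝ^{m×n}` has full row rank `m` and `G = U S Vᵀ` is a compact SVD
(`U` orthogonal `m×m`, `S` diagonal with positive diagonal entries, `VᵀV = 1`), then
`(G Gᵀ)^{-1/2} G = U Vᵀ`: one step of ASGO without momentum, gradient accumulation and
damping coincides with one step of Muon without momentum. -/
theorem stmt4 (m n : ℕ)
    (G : Matrix (Fin m) (Fin n) ℝ) (hrank : G.rank = m)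
    (U S : Matrix (Fin m) (Fin m) ℝ) (V : Matrix (Fin n) (Fin m) ℝ)
    (hU : Uᵀ * U = 1) (hV : Vᵀ * V = 1)
    (d : Fin m → ℝ) (hd : ∀ i, 0 < d i) (hS : S = Matrix.diagonal d)
    (hG : G = U * S * Vᵀ) :
    (psdSqrt (G * Gᵀ))⁻¹ * G = U * Vᵀ :=
  stmt4_general m n G U S V hU hV d hd hS hG
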